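/- Let P and Z be real symmetric n×n matrices such that R(0), R(P), R(P+Z), R_22(P+Z) and the Schur complement R#_22(P+Z) = R_11(P+Z) − R_12(P+Z) R_22(P+Z)^{-1} R_21(P+Z) are invertible, and let L ∈ ℝ^{m2×n} be arbitrary. Set J(P) = [K_1(P) − K_1(0); L] (stacked), K̂(P+Z) = K(P+Z) − K(0), and Δ = J(P) − K̂(P+Z). Then Δ^T R(P+Z) Δ = (N_1(P,Z) − R_12(P+Z) R_22(P+Z)^{-1} N_2(P,Z))^T (R#_22(P+Z))^{-1} (N_1(P,Z) − R_12(P+Z) R_22(P+Z)^{-1} N_2(P,Z)) + Δ^T [[R_12(P+Z) R_22(P+Z)^{-1} R_21(P+Z), R_12(P+Z)],[R_21(P+Z), R_22(P+Z)]] Δ. -/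

import Mathlib

/-!
`Δ = [K₁(P) − K₁(P+Z); L − (K₂(P+Z) − K₂(0))]`, and the two block matrices in the identity
differ only in their `(1,1)` block, so the difference of the quadratic forms is
`δᵀ R#₂₂(P+Z) δ` with `δ = K₁(P) − K₁(P+Z)`. Since `R(X) K(X) = −S(X)` and `R`, `S` are
affine in `X`, one gets `R(P+Z) (K(P) − K(P+Z)) = N(P,Z)`; eliminating the second
block row gives `R#₂₂(P+Z) δ = N₁ − R₁₂ R₂₂⁻¹ N₂`, and the Schur complement is symmetric
because `R(P+Z)` is.
-/

open Matrix BigOperators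

noncomputable section

/-- Mean-square stability of the tuple `(F, G_1, …, G_r)` via the Lyapunov characterization. -/
def MSStable {n r : ℕ} (F : Matrix (Fin n) (Fin n) ℝ)
    (G : Fin r → Matrix (Fin n) (Fin n) ℝ) : Prop :=
  ∃ X : Matrix (Fin n) (Fin n) ℝ, X.PosDef ∧
    (-(X * F + Fᵀ * X + ∑ l, (G l)ᵀ * X * G l)).PosDef

/-- Stochastic detectability of the system `[E_0, …, E_r; F, G_1, …, G_r]`. -/
def StochDetectable {n q r : ℕ} (E0 : Matrix (Fin q) (Fin n) ℝ)
    (E : Fin r → Matrix (Fin q) (Fin n) ℝ)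
    (F : Matrix (Fin n) (Fin n) ℝ) (G : Fin r → Matrix (Fin n) (Fin n) ℝ) : Prop :=
  ∃ Θ : Matrix (Fin n) (Fin q) ℝ, MSStable (F + Θ * E0) (fun l => G l + Θ * E l)

/-- The data of the zero-sum linear-quadratic stochastic differential game. -/
structure GameData (n m1 m2 r : ℕ) where
  A : Matrix (Fin n) (Fin n) ℝ
  C : Fin r → Matrix (Fin n) (Fin n) ℝ
  B1 : Matrix (Fin n) (Fin m1) ℝ
  B2 : Matrix (Fin n) (Fin m2) ℝ
  D1 : Fin r → Matrix (Fin n) (Fin m1) ℝ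
  D2 : Fin r → Matrix (Fin n) (Fin m2) ℝ
  Q : Matrix (Fin n) (Fin n) ℝ
  hQ : Q.IsSymm
  S1 : Matrix (Fin m1) (Fin n) ℝ
  S2 : Matrix (Fin m2) (Fin n) ℝ
  R11 : Matrix (Fin m1) (Fin m1) ℝ
  R22 : Matrix (Fin m2) (Fin m2) ℝ
  R12 : Matrix (Fin m1) (Fin m2) ℝ
  hR11 : R11.IsSymm
  hR22 : R22.IsSymm

namespace GameData

variable {n m1 m2 r : ℕ} (g : GameData n m1 m2 r)

/-- The stacked weighting matrix `S = [S_1; S_2]`. -/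
def Sw : Matrix (Fin m1 ⊕ Fin m2) (Fin n) ℝ := fromRows g.S1 g.S2

/-- The full weighting matrix `R = [[R_11, R_12],[R_21, R_22]]` with `R_21 = R_12ᵀ`. -/
def Rw : Matrix (Fin m1 ⊕ Fin m2) (Fin m1 ⊕ Fin m2) ℝ :=
  fromBlocks g.R11 g.R12 g.R12ᵀ g.R22

/-- `S_1(P) = B_1ᵀ P + Σ_l D_{l,1}ᵀ P C_l + S_1`. -/
def S1P (P : Matrix (Fin n) (Fin n) ℝ) : Matrix (Fin m1) (Fin n) ℝ :=
  g.B1ᵀ * P + ∑ l, (g.D1 l)ᵀ * P * g.C l + g.S1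

/-- `S_2(P) = B_2ᵀ P + Σ_l D_{l,2}ᵀ P C_l + S_2`. -/
def S2P (P : Matrix (Fin n) (Fin n) ℝ) : Matrix (Fin m2) (Fin n) ℝ :=
  g.B2ᵀ * P + ∑ l, (g.D2 l)ᵀ * P * g.C l + g.S2

/-- `S(P) = [S_1(P); S_2(P)]`. -/
def SP (P : Matrix (Fin n) (Fin n) ℝ) : Matrix (Fin m1 ⊕ Fin m2) (Fin n) ℝ :=
  fromRows (g.S1P P) (g.S2P P)

/-- `R_11(P)`. -/
def R11P (P : Matrix (Fin n) (Fin n) ℝ) : Matrix (Fin m1) (Fin m1) ℝ :=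
  g.R11 + ∑ l, (g.D1 l)ᵀ * P * g.D1 l

/-- `R_12(P)`. -/
def R12P (P : Matrix (Fin n) (Fin n) ℝ) : Matrix (Fin m1) (Fin m2) ℝ :=
  g.R12 + ∑ l, (g.D1 l)ᵀ * P * g.D2 l

/-- `R_21(P)`. -/
def R21P (P : Matrix (Fin n) (Fin n) ℝ) : Matrix (Fin m2) (Fin m1) ℝ :=
  g.R12ᵀ + ∑ l, (g.D2 l)ᵀ * P * g.D1 l

/-- `R_22(P)`. -/
def R22P (P : Matrix (Fin n) (Fin n) ℝ) : Matrix (Fin m2) (Fin m2) ℝ :=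
  g.R22 + ∑ l, (g.D2 l)ᵀ * P * g.D2 l

/-- `R(P)` assembled from its blocks. -/
def RP (P : Matrix (Fin n) (Fin n) ℝ) : Matrix (Fin m1 ⊕ Fin m2) (Fin m1 ⊕ Fin m2) ℝ :=
  fromBlocks (g.R11P P) (g.R12P P) (g.R21P P) (g.R22P P)

/-- `K(P) = −R(P)⁻¹ S(P)` (stacked feedback gain). -/
def KP (P : Matrix (Fin n) (Fin n) ℝ) : Matrix (Fin m1 ⊕ Fin m2) (Fin n) ℝ :=
  -((g.RP P)⁻¹ * g.SP P)

/-- `K_1(P)`: the first block of `K(P)`. -/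
def K1 (P : Matrix (Fin n) (Fin n) ℝ) : Matrix (Fin m1) (Fin n) ℝ :=
  (g.KP P).submatrix Sum.inl id

/-- `K_2(P)`: the second block of `K(P)`. -/
def K2 (P : Matrix (Fin n) (Fin n) ℝ) : Matrix (Fin m2) (Fin n) ℝ :=
  (g.KP P).submatrix Sum.inr id

/-- `G(P) = PA + AᵀP + Σ_l C_lᵀ P C_l + Q − S(P)ᵀ R(P)⁻¹ S(P)`. -/
def GP (P : Matrix (Fin n) (Fin n) ℝ) : Matrix (Fin n) (Fin n) ℝ :=
  P * g.A + g.Aᵀ * P + ∑ l, (g.C l)ᵀ * P * g.C l + g.Q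
    - (g.SP P)ᵀ * (g.RP P)⁻¹ * g.SP P

/-- `A_{K(P)} = A + B_1 K_1(P) + B_2 K_2(P)`. -/
def AK (P : Matrix (Fin n) (Fin n) ℝ) : Matrix (Fin n) (Fin n) ℝ :=
  g.A + g.B1 * g.K1 P + g.B2 * g.K2 P

/-- `C_{l,K(P)} = C_l + D_{l,1} K_1(P) + D_{l,2} K_2(P)`. -/
def CK (P : Matrix (Fin n) (Fin n) ℝ) (l : Fin r) : Matrix (Fin n) (Fin n) ℝ :=
  g.C l + g.D1 l * g.K1 P + g.D2 l * g.K2 P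

/-- `N_1(P,Z)`. -/
def N1 (P Z : Matrix (Fin n) (Fin n) ℝ) : Matrix (Fin m1) (Fin n) ℝ :=
  g.B1ᵀ * Z + ∑ l, (g.D1 l)ᵀ * Z * g.CK P l

/-- `N_2(P,Z)`. -/
def N2 (P Z : Matrix (Fin n) (Fin n) ℝ) : Matrix (Fin m2) (Fin n) ℝ :=
  g.B2ᵀ * Z + ∑ l, (g.D2 l)ᵀ * Z * g.CK P l

/-- `N(P,Z) = [N_1(P,Z); N_2(P,Z)]`. -/
def NP (P Z : Matrix (Fin n) (Fin n) ℝ) : Matrix (Fin m1 ⊕ Fin m2) (Fin n) ℝ :=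
  fromRows (g.N1 P Z) (g.N2 P Z)

/-- Membership in `Dom G`: `R_22(P) ≻ 0` and `R_11(P) ≺ 0`. -/
def MemDomG (P : Matrix (Fin n) (Fin n) ℝ) : Prop :=
  (g.R22P P).PosDef ∧ (-(g.R11P P)).PosDef

/-- `Z` satisfies the inner Riccati equation at `P`. -/
def InnerRiccati (P Z : Matrix (Fin n) (Fin n) ℝ) : Prop :=
  g.GP P + Z * g.AK P + (g.AK P)ᵀ * Z + ∑ l, (g.CK P l)ᵀ * Z * g.CK P l
    - (g.N2 P Z)ᵀ * (g.R22P (P + Z))⁻¹ * g.N2 P Z = 0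

/-- `A_L = A + B_1 K_1(0) + B_2 K_2(0) + B_2 L`. -/
def AL (L : Matrix (Fin m2) (Fin n) ℝ) : Matrix (Fin n) (Fin n) ℝ :=
  g.A + g.B1 * g.K1 0 + g.B2 * g.K2 0 + g.B2 * L

/-- `C_{lL} = C_l + D_{l,1} K_1(0) + D_{l,2} K_2(0) + D_{l,2} L`. -/
def CL (L : Matrix (Fin m2) (Fin n) ℝ) (l : Fin r) : Matrix (Fin n) (Fin n) ℝ :=
  g.C l + g.D1 l * g.K1 0 + g.D2 l * g.K2 0 + g.D2 l * L

/-- `Q_L = Q − S(0)ᵀ R(0)⁻¹ S(0) + Lᵀ R_22 L`. -/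
def QL (L : Matrix (Fin m2) (Fin n) ℝ) : Matrix (Fin n) (Fin n) ℝ :=
  g.Q - (g.SP 0)ᵀ * (g.RP 0)⁻¹ * g.SP 0 + Lᵀ * g.R22 * L

/-- `S_L = R_12 L`. -/
def SL (L : Matrix (Fin m2) (Fin n) ℝ) : Matrix (Fin m1) (Fin n) ℝ := g.R12 * L

/-- The linear term `B_1ᵀ P + Σ_l D_{l,1}ᵀ P C_{lL} + S_L` in the `L`-Riccati equation. -/
def S1L (L : Matrix (Fin m2) (Fin n) ℝ) (P : Matrix (Fin n) (Fin n) ℝ) :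
    Matrix (Fin m1) (Fin n) ℝ :=
  g.B1ᵀ * P + ∑ l, (g.D1 l)ᵀ * P * g.CL L l + g.SL L

/-- Left-hand side of the algebraic Riccati equation associated with `L`. -/
def AREL (L : Matrix (Fin m2) (Fin n) ℝ) (P : Matrix (Fin n) (Fin n) ℝ) :
    Matrix (Fin n) (Fin n) ℝ :=
  P * g.AL L + (g.AL L)ᵀ * P + ∑ l, (g.CL L l)ᵀ * P * g.CL L l + g.QL L
    - (g.S1L L P)ᵀ * (g.R11P P)⁻¹ * g.S1L L P

/-- `K_L(P) = −(R_11 + Σ_l D_{l,1}ᵀ P D_{l,1})⁻¹ (B_1ᵀ P + Σ_l D_{l,1}ᵀ P C_{lL} + S_L)`. -/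
def KL (L : Matrix (Fin m2) (Fin n) ℝ) (P : Matrix (Fin n) (Fin n) ℝ) :
    Matrix (Fin m1) (Fin n) ℝ :=
  -((g.R11P P)⁻¹ * g.S1L L P)

/-- `P̃` is a stabilizing solution of the `L`-Riccati equation. -/
def IsStabSolL (L : Matrix (Fin m2) (Fin n) ℝ) (P : Matrix (Fin n) (Fin n) ℝ) : Prop :=
  P.IsSymm ∧ g.AREL L P = 0 ∧ (-(g.R11P P)).PosDef ∧
    MSStable (g.AL L + g.B1 * g.KL L P) (fun l => g.CL L l + g.D1 l * g.KL L P)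

/-- `L ∈ 𝒜`. -/
def MemA (L : Matrix (Fin m2) (Fin n) ℝ) : Prop :=
  MSStable (g.AL L) (g.CL L) ∧ ∃ P, g.IsStabSolL L P

end GameData

namespace Matrix

variable {m m₁ m₂ n α : Type*}

lemma fromRows_sub_fromRows [Sub α] (A₁ B₁ : Matrix m₁ n α) (A₂ B₂ : Matrix m₂ n α) :
    fromRows A₁ A₂ - fromRows B₁ B₂ = fromRows (A₁ - B₁) (A₂ - B₂) := by
  ext (i | i) j <;> rfl

lemma fromRows_add_fromRows [Add α] (A₁ B₁ : Matrix m₁ n α) (A₂ B₂ : Matrix m₂ n α) :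
    fromRows A₁ A₂ + fromRows B₁ B₂ = fromRows (A₁ + B₁) (A₂ + B₂) := by
  ext (i | i) j <;> rfl

lemma fromRows_transpose_mul_fromBlocks_mul_sub [Fintype m₁] [Fintype m₂] [CommRing α]
    (x₁ : Matrix m₁ n α) (x₂ : Matrix m₂ n α)
    (A A' : Matrix m₁ m₁ α) (B : Matrix m₁ m₂ α) (C : Matrix m₂ m₁ α)
    (D : Matrix m₂ m₂ α) :
    (fromRows x₁ x₂)ᵀ * fromBlocks A B C D * fromRows x₁ x₂
        - (fromRows x₁ x₂)ᵀ * fromBlocks A' B C D * fromRows x₁ x₂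
      = x₁ᵀ * (A - A') * x₁ := by
  have hdiff : fromBlocks A B C D - fromBlocks A' B C D = fromBlocks (A - A') 0 0 0 := by
    ext (i | i) (j | j) <;> simp
  rw [← Matrix.sub_mul, ← Matrix.mul_sub, hdiff, transpose_fromRows, fromCols_mul_fromBlocks,
    fromCols_mul_fromRows]
  simp

variable [Fintype m₂] [DecidableEq m₂] [CommRing α]

lemma schur_mul_eq_of_fromBlocks_mul_fromRows_eq [Fintype m₁] {A : Matrix m₁ m₁ α}
    {B : Matrix m₁ m₂ α} {C : Matrix m₂ m₁ α} {D : Matrix m₂ m₂ α}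
    {x₁ y₁ : Matrix m₁ n α} {x₂ y₂ : Matrix m₂ n α}
    (hD : IsUnit D.det) (h : fromBlocks A B C D * fromRows x₁ x₂ = fromRows y₁ y₂) :
    (A - B * D⁻¹ * C) * x₁ = y₁ - B * D⁻¹ * y₂ := by
  rw [fromBlocks_mul_fromRows, fromRows_ext_iff] at h
  rw [← h.1, ← h.2]
  simp only [Matrix.mul_add, Matrix.sub_mul, Matrix.mul_assoc,
    Matrix.nonsing_inv_mul_cancel_left _ _ hD]
  abel

lemma IsSymm.schur {A : Matrix m₁ m₁ α} {B : Matrix m₁ m₂ α} {C : Matrix m₂ m₁ α}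
    {D : Matrix m₂ m₂ α} (h : (Matrix.fromBlocks A B C D).IsSymm) :
    (A - B * D⁻¹ * C).IsSymm := by
  obtain ⟨hA, hBC, hCB, hD⟩ := isSymm_fromBlocks_iff.mp h
  simp only [IsSymm, transpose_sub, transpose_mul, hA.eq, hCB, hBC, hD.inv.eq, Matrix.mul_assoc]

lemma IsSymm.transpose_mul_mul_eq_of_mul_eq {S : Matrix m₂ m₂ α} {x w : Matrix m₂ n α}
    (hS : S.IsSymm) (hdet : IsUnit S.det) (h : S * x = w) : xᵀ * S * x = wᵀ * S⁻¹ * w := by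
  rw [← h, transpose_mul, hS.eq]
  simp only [Matrix.mul_assoc, nonsing_inv_mul_cancel_left _ _ hdet]

end Matrix

namespace GameData

variable {n m1 m2 r : ℕ} (g : GameData n m1 m2 r)

lemma RP_isSymm {X : Matrix (Fin n) (Fin n) ℝ} (hX : X.IsSymm) : (g.RP X).IsSymm := by
  have hsum : ∀ {a b : ℕ} (E : Fin r → Matrix (Fin n) (Fin a) ℝ)
      (F : Fin r → Matrix (Fin n) (Fin b) ℝ),
      (∑ l, (E l)ᵀ * X * F l)ᵀ = ∑ l, (F l)ᵀ * X * E l := by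
    intros
    simp [transpose_sum, transpose_mul, hX.eq, Matrix.mul_assoc]
  refine IsSymm.fromBlocks ?_ ?_ ?_ <;>
    simp only [IsSymm, R11P, R12P, R21P, R22P, transpose_add, hsum, g.hR11.eq, g.hR22.eq]

lemma KP_eq_fromRows (X : Matrix (Fin n) (Fin n) ℝ) : g.KP X = fromRows (g.K1 X) (g.K2 X) :=
  (fromRows_toRows _).symm

lemma RP_mul_KP {X : Matrix (Fin n) (Fin n) ℝ} (hX : IsUnit (g.RP X).det) :
    g.RP X * g.KP X = -g.SP X := by
  rw [KP, Matrix.mul_neg, Matrix.mul_nonsing_inv_cancel_left _ _ hX]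

lemma NP_eq_SP_sub_add_RP_sub_mul_KP (P Z : Matrix (Fin n) (Fin n) ℝ) :
    g.NP P Z = g.SP (P + Z) - g.SP P + (g.RP (P + Z) - g.RP P) * g.KP P := by
  have hRdiff : g.RP (P + Z) - g.RP P = fromBlocks (∑ l, (g.D1 l)ᵀ * Z * g.D1 l)
      (∑ l, (g.D1 l)ᵀ * Z * g.D2 l) (∑ l, (g.D2 l)ᵀ * Z * g.D1 l)
      (∑ l, (g.D2 l)ᵀ * Z * g.D2 l) := by
    ext (i | i) (j | j) <;>
      simp [RP, R11P, R12P, R21P, R22P, Matrix.mul_add, Matrix.add_mul, Finset.sum_add_distrib]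
  rw [hRdiff, KP_eq_fromRows, fromBlocks_mul_fromRows, SP, SP, fromRows_sub_fromRows,
    fromRows_add_fromRows, NP]
  congr 1
  · simp only [N1, CK, S1P, Matrix.mul_add, Matrix.add_mul, Finset.sum_add_distrib,
      Matrix.sum_mul, Matrix.mul_assoc]
    abel
  · simp only [N2, CK, S2P, Matrix.mul_add, Matrix.add_mul, Finset.sum_add_distrib,
      Matrix.sum_mul, Matrix.mul_assoc]
    abel

lemma RP_mul_KP_sub_KP {P Z : Matrix (Fin n) (Fin n) ℝ} (hP : IsUnit (g.RP P).det)
    (hPZ : IsUnit (g.RP (P + Z)).det) :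
    g.RP (P + Z) * (g.KP P - g.KP (P + Z)) = g.NP P Z := by
  rw [NP_eq_SP_sub_add_RP_sub_mul_KP, Matrix.mul_sub, RP_mul_KP g hPZ, Matrix.sub_mul,
    RP_mul_KP g hP]
  abel

end GameData

theorem statement6_general {n m1 m2 r : ℕ} (g : GameData n m1 m2 r)
    (P Z : Matrix (Fin n) (Fin n) ℝ) (hP : P.IsSymm) (hZ : Z.IsSymm)
    (hRP : IsUnit (g.RP P).det) (hRPZ : IsUnit (g.RP (P + Z)).det)
    (hR22 : IsUnit (g.R22P (P + Z)).det)
    (hSchur : IsUnit (g.R11P (P + Z)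
      - g.R12P (P + Z) * (g.R22P (P + Z))⁻¹ * g.R21P (P + Z)).det)
    (L : Matrix (Fin m2) (Fin n) ℝ) :
    (fromRows (g.K1 P - g.K1 0) L - (g.KP (P + Z) - g.KP 0))ᵀ * g.RP (P + Z)
        * (fromRows (g.K1 P - g.K1 0) L - (g.KP (P + Z) - g.KP 0))
      = (g.N1 P Z - g.R12P (P + Z) * (g.R22P (P + Z))⁻¹ * g.N2 P Z)ᵀ
          * (g.R11P (P + Z) - g.R12P (P + Z) * (g.R22P (P + Z))⁻¹ * g.R21P (P + Z))⁻¹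
          * (g.N1 P Z - g.R12P (P + Z) * (g.R22P (P + Z))⁻¹ * g.N2 P Z)
        + (fromRows (g.K1 P - g.K1 0) L - (g.KP (P + Z) - g.KP 0))ᵀ
          * fromBlocks (g.R12P (P + Z) * (g.R22P (P + Z))⁻¹ * g.R21P (P + Z))
              (g.R12P (P + Z)) (g.R21P (P + Z)) (g.R22P (P + Z))
          * (fromRows (g.K1 P - g.K1 0) L - (g.KP (P + Z) - g.KP 0)) := by
  have hΔ : fromRows (g.K1 P - g.K1 0) L - (g.KP (P + Z) - g.KP 0)
      = fromRows (g.K1 P - g.K1 (P + Z)) (L - (g.K2 (P + Z) - g.K2 0)) := by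
    rw [g.KP_eq_fromRows, g.KP_eq_fromRows, fromRows_sub_fromRows, fromRows_sub_fromRows]
    congr 1
    abel
  have hN : g.RP (P + Z) * fromRows (g.K1 P - g.K1 (P + Z)) (g.K2 P - g.K2 (P + Z))
      = fromRows (g.N1 P Z) (g.N2 P Z) := by
    simpa only [GameData.KP_eq_fromRows, fromRows_sub_fromRows, GameData.NP] using
      g.RP_mul_KP_sub_KP hRP hRPZ
  have hSchurRow := schur_mul_eq_of_fromBlocks_mul_fromRows_eq hR22 hN
  rw [← sub_eq_iff_eq_add, hΔ, GameData.RP, fromRows_transpose_mul_fromBlocks_mul_sub]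
  exact (g.RP_isSymm (hP.add hZ)).schur.transpose_mul_mul_eq_of_mul_eq hSchur hSchurRow

/-- decomposition of the quadratic form `Δᵀ R(P+Z) Δ` where
`Δ = J(P) − K̂(P+Z)`, `J(P) = [K_1(P) − K_1(0); L]` and `K̂(P+Z) = K(P+Z) − K(0)`. -/
theorem statement6 {n m1 m2 r : ℕ} (g : GameData n m1 m2 r)
    (P Z : Matrix (Fin n) (Fin n) ℝ) (hP : P.IsSymm) (hZ : Z.IsSymm)
    (hR0 : IsUnit (g.RP 0).det)
    (hRP : IsUnit (g.RP P).det) (hRPZ : IsUnit (g.RP (P + Z)).det)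
    (hR22 : IsUnit (g.R22P (P + Z)).det)
    (hSchur : IsUnit (g.R11P (P + Z)
      - g.R12P (P + Z) * (g.R22P (P + Z))⁻¹ * g.R21P (P + Z)).det)
    (L : Matrix (Fin m2) (Fin n) ℝ) :
    (fromRows (g.K1 P - g.K1 0) L - (g.KP (P + Z) - g.KP 0))ᵀ * g.RP (P + Z)
        * (fromRows (g.K1 P - g.K1 0) L - (g.KP (P + Z) - g.KP 0))
      = (g.N1 P Z - g.R12P (P + Z) * (g.R22P (P + Z))⁻¹ * g.N2 P Z)ᵀ
          * (g.R11P (P + Z) - g.R12P (P + Z) * (g.R22P (P + Z))⁻¹ * g.R21P (P + Z))⁻¹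
          * (g.N1 P Z - g.R12P (P + Z) * (g.R22P (P + Z))⁻¹ * g.N2 P Z)
        + (fromRows (g.K1 P - g.K1 0) L - (g.KP (P + Z) - g.KP 0))ᵀ
          * fromBlocks (g.R12P (P + Z) * (g.R22P (P + Z))⁻¹ * g.R21P (P + Z))
              (g.R12P (P + Z)) (g.R21P (P + Z)) (g.R22P (P + Z))
          * (fromRows (g.K1 P - g.K1 0) L - (g.KP (P + Z) - g.KP 0)) :=
  statement6_general g P Z hP hZ hRP hRPZ hR22 hSchur L
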